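/- Let X ⊆ ℝ^d be a nonempty closed convex set, let v_1,…,v_m ∈ ℝ^d, and set z_i = Π_X[v_i] for each i, z̄ = (1/m)∑_{ℓ=1}^m z_ℓ and v̄ = (1/m)∑_{ℓ=1}^m v_ℓ. Then ∑_{i=1}^m ‖z_i − z̄‖ ≤ 2 ∑_{i=1}^m ‖v_i − v̄‖. -/

import Mathlib

/-!
The projection onto a convex set is characterized by the variational inequality
`⟪v - Π v, w - Π v⟫ ≤ 0` for `w ∈ X`; adding the two inequalities for `v₁, v₂` shows that the
projection is nonexpansive. The bound then holds for any nonexpansive image `z` of `v`: writing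
`z i - z̄` as the average of the `z i - z ℓ`, the left side is at most
`m⁻¹ ∑ i ∑ ℓ ‖v i - v ℓ‖`, and the triangle inequality through `v̄` bounds this by `2 ∑ i ‖v i - v̄‖`.
-/

open Finset InnerProductSpace

section Projection

variable {F : Type*} [NormedAddCommGroup F] [InnerProductSpace ℝ F]

theorem real_inner_sub_nonpos_of_forall_norm_sub_le {K : Set F} (hK : Convex ℝ K) {u v : F}
    (hv : v ∈ K) (hmin : ∀ w ∈ K, ‖v - u‖ ≤ ‖w - u‖) : ∀ w ∈ K, ⟪u - v, w - v⟫_ℝ ≤ 0 := by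
  rw [← norm_eq_iInf_iff_real_inner_le_zero hK hv]
  have : Nonempty K := ⟨⟨v, hv⟩⟩
  have hbdd : BddBelow (Set.range fun w : K => ‖u - w‖) :=
    ⟨0, Set.forall_mem_range.2 fun _ => norm_nonneg _⟩
  refine le_antisymm (le_ciInf fun w => ?_) (ciInf_le hbdd ⟨v, hv⟩)
  simpa only [norm_sub_rev u] using hmin w w.2

theorem norm_sub_le_of_real_inner_sub_nonpos {u₁ u₂ v₁ v₂ : F}
    (h₁ : ⟪u₁ - v₁, v₂ - v₁⟫_ℝ ≤ 0) (h₂ : ⟪u₂ - v₂, v₁ - v₂⟫_ℝ ≤ 0) :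
    ‖v₁ - v₂‖ ≤ ‖u₁ - u₂‖ := by
  have hsq : ‖v₁ - v₂‖ ^ 2 ≤ ⟪u₁ - u₂, v₁ - v₂⟫_ℝ := by
    have : ⟪u₁ - u₂, v₁ - v₂⟫_ℝ - ‖v₁ - v₂‖ ^ 2
        = -⟪u₁ - v₁, v₂ - v₁⟫_ℝ - ⟪u₂ - v₂, v₁ - v₂⟫_ℝ := by
      rw [← real_inner_self_eq_norm_sq]
      simp only [inner_sub_left, inner_sub_right]
      ring
    linarith
  have hcs := real_inner_le_norm (u₁ - u₂) (v₁ - v₂)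
  rcases (norm_nonneg (v₁ - v₂)).eq_or_lt with h0 | hpos
  · rw [← h0]
    exact norm_nonneg _
  · exact le_of_mul_le_mul_right (by nlinarith) hpos

end Projection

section Average

variable {ι E : Type*} [Fintype ι] [NormedAddCommGroup E]

theorem sum_sum_norm_sub_le (x : ι → E) (c : E) :
    ∑ i, ∑ j, ‖x i - x j‖ ≤ 2 * Fintype.card ι * ∑ i, ‖x i - c‖ := by
  calc ∑ i, ∑ j, ‖x i - x j‖ ≤ ∑ i, ∑ j, (‖x i - c‖ + ‖x j - c‖) :=
        sum_le_sum fun i _ => sum_le_sum fun j _ =>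
          (norm_sub_le_norm_sub_add_norm_sub _ c _).trans_eq (by rw [norm_sub_rev c])
    _ = 2 * Fintype.card ι * ∑ i, ‖x i - c‖ := by
        simp only [sum_add_distrib, sum_const, card_univ, nsmul_eq_mul, ← mul_sum]
        ring

variable [NormedSpace ℝ E]

theorem sub_average_eq_average_sub (x : ι → E) (i : ι) :
    x i - (Fintype.card ι : ℝ)⁻¹ • ∑ j, x j = (Fintype.card ι : ℝ)⁻¹ • ∑ j, (x i - x j) := by
  have : Nonempty ι := ⟨i⟩
  have hcard : (Fintype.card ι : ℝ) ≠ 0 := Nat.cast_ne_zero.2 Fintype.card_ne_zero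
  rw [sum_sub_distrib, smul_sub, sum_const, card_univ, ← Nat.cast_smul_eq_nsmul ℝ, smul_smul,
    inv_mul_cancel₀ hcard, one_smul]

theorem sum_norm_sub_average_le_of_norm_sub_le {x y : ι → E}
    (hxy : ∀ i j, ‖y i - y j‖ ≤ ‖x i - x j‖) :
    ∑ i, ‖y i - (Fintype.card ι : ℝ)⁻¹ • ∑ j, y j‖
      ≤ 2 * ∑ i, ‖x i - (Fintype.card ι : ℝ)⁻¹ • ∑ j, x j‖ := by
  cases isEmpty_or_nonempty ι
  · simp
  set n : ℝ := (Fintype.card ι : ℝ)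
  have hn : 0 < n := Nat.cast_pos.2 Fintype.card_pos
  calc ∑ i, ‖y i - n⁻¹ • ∑ j, y j‖ ≤ ∑ i, n⁻¹ * ∑ j, ‖x i - x j‖ := by
        refine sum_le_sum fun i _ => ?_
        rw [sub_average_eq_average_sub, norm_smul, Real.norm_of_nonneg (by positivity)]
        gcongr
        exact (norm_sum_le _ _).trans (sum_le_sum fun j _ => hxy i j)
    _ ≤ n⁻¹ * (2 * n * ∑ i, ‖x i - n⁻¹ • ∑ j, x j‖) := by
        rw [← mul_sum]
        gcongr
        exact sum_sum_norm_sub_le x _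
    _ = 2 * ∑ i, ‖x i - n⁻¹ • ∑ j, x j‖ := by
        field_simp

end Average

theorem sum_dist_proj_avg_le_general {d m : ℕ}
    (X : Set (EuclideanSpace ℝ (Fin d)))
    (hXconvex : Convex ℝ X)
    (v z : Fin m → EuclideanSpace ℝ (Fin d))
    (hproj : ∀ i, z i ∈ X ∧ ∀ w ∈ X, ‖z i - v i‖ ≤ ‖w - v i‖) :
    ∑ i, ‖z i - (m : ℝ)⁻¹ • ∑ ℓ, z ℓ‖ ≤ 2 * ∑ i, ‖v i - (m : ℝ)⁻¹ • ∑ ℓ, v ℓ‖ := by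
  have hvi i := real_inner_sub_nonpos_of_forall_norm_sub_le hXconvex (hproj i).1 (hproj i).2
  have hnonexp (i j) : ‖z i - z j‖ ≤ ‖v i - v j‖ :=
    norm_sub_le_of_real_inner_sub_nonpos (hvi i _ (hproj j).1) (hvi j _ (hproj i).1)
  simpa only [Fintype.card_fin] using sum_norm_sub_average_le_of_norm_sub_le hnonexp

/-- **Projection disagreement bound.**
If `z i` is the Euclidean projection of `v i` onto the nonempty closed convex set `X`,
`z̄` and `v̄` are the averages of the `z i`'s and `v i`'s, then
`∑ i ‖z i − z̄‖ ≤ 2 ∑ i ‖v i − v̄‖`. -/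
theorem sum_dist_proj_avg_le {d m : ℕ} (hm : 0 < m)
    (X : Set (EuclideanSpace ℝ (Fin d)))
    (hXne : X.Nonempty) (hXclosed : IsClosed X) (hXconvex : Convex ℝ X)
    (v z : Fin m → EuclideanSpace ℝ (Fin d))
    (hproj : ∀ i, z i ∈ X ∧ ∀ w ∈ X, ‖z i - v i‖ ≤ ‖w - v i‖) :
    ∑ i, ‖z i - (m : ℝ)⁻¹ • ∑ ℓ, z ℓ‖ ≤ 2 * ∑ i, ‖v i - (m : ℝ)⁻¹ • ∑ ℓ, v ℓ‖ :=
  sum_dist_proj_avg_le_general X hXconvex v z hproj
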